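/- arXiv:2402.10668 — 5 statements merged into one kernel-verified Lean document; each statement's English description precedes it below -/
import Mathlib

section
/- Let μ be a finite measure, Q measurable, λ ∈ (0,1), and suppose μ(Pre_*^k(Q)) ≤ λ^k μ(Q) for all k, with μ^{0,H}(Q) = μ(⋃_{i=0}^H Pre_*^i(Q)) and μ(⋃_{j=a}^{a+H} Pre_*^j(Q)) ≤ λ^a μ^{0,H}(Q) for all a ≥ 0. Then for any positive integer T, with τ = ⌈(H+T+1)/(H+1)⌉ − 1, it holds that μ^{0,H+T}(Q) ≤ μ^{0,H}(Q) · (λ^T + Σ_{i=0}^{τ−1} λ^{i(H+1)}). -/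
open MeasureTheory

/-- With `P k = Pre_*^k(Q)`, `λ ∈ (0,1)`, `μ(P k) ≤ λ^k μ(Q)`,
`μ^{0,H}(Q) = μ(⋃_{i=0}^H P i)` and the shifted-block bound
`μ(⋃_{j=a}^{a+H} P j) ≤ λ^a μ^{0,H}(Q)`, we have, with
`τ = ⌈(H+T+1)/(H+1)⌉ − 1`,
`μ^{0,H+T}(Q) ≤ μ^{0,H}(Q) · (λ^T + Σ_{i<τ} λ^{i(H+1)})`. -/
theorem stmt7 {X : Type*} [MeasurableSpace X] (μ : Measure X) [IsFiniteMeasure μ]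
    (P : ℕ → Set X) (Q : Set X) (hP0 : P 0 = Q)
    (lam : ENNReal) (hlam0 : 0 < lam) (hlam1 : lam < 1)
    (hPk : ∀ k : ℕ, μ (P k) ≤ lam ^ k * μ Q)
    (H T : ℕ) (hH : 0 < H) (hT : 0 < T)
    (hblock : ∀ a : ℕ, μ (⋃ j ∈ Finset.Icc a (a + H), P j) ≤
      lam ^ a * μ (⋃ i ∈ Finset.range (H + 1), P i)) :
    μ (⋃ i ∈ Finset.range (H + T + 1), P i) ≤
      μ (⋃ i ∈ Finset.range (H + 1), P i) *
        (lam ^ T +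
          ∑ i ∈ Finset.range ((H + T + 1 + H) / (H + 1) - 1), lam ^ (i * (H + 1))) := by
  set M := μ (⋃ i ∈ Finset.range (H + 1), P i) with hM
  have hτ : (H + T + 1 + H) / (H + 1) - 1 = (T + H) / (H + 1) := by
    have : H + T + 1 + H = T + H + (H + 1) := by ring
    rw [this, Nat.add_div_right _ ((by omega : 0 < H + 1))]
    exact Nat.add_sub_cancel _ _
  set τ := (H + T + 1 + H) / (H + 1) - 1 with hτdef
  have hsub : (⋃ i ∈ Finset.range (H + T + 1), P i) ⊆
      (⋃ j ∈ Finset.Icc T (T + H), P j) ∪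
        ⋃ i ∈ Finset.range τ, ⋃ j ∈ Finset.Icc (i * (H + 1)) (i * (H + 1) + H), P j := by
    intro x hx
    simp only [Set.mem_iUnion, Finset.mem_range, Set.mem_union, Finset.mem_Icc] at hx ⊢
    obtain ⟨k, hk, hxk⟩ := hx
    rcases le_or_gt T k with h | h
    · exact Or.inl ⟨k, ⟨h, by omega⟩, hxk⟩
    · refine Or.inr ⟨k / (H + 1), ?_, k, ?_, hxk⟩
      · rw [hτ]
        have h1 : k / (H + 1) ≤ (T - 1) / (H + 1) :=
          Nat.div_le_div_right (by omega)
        have h2 : (T - 1 + (H + 1)) / (H + 1) = (T - 1) / (H + 1) + 1 :=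
          Nat.add_div_right _ ((by omega : 0 < H + 1))
        rw [show T - 1 + (H + 1) = T + H by omega] at h2
        omega
      · have h1 : k / (H + 1) * (H + 1) ≤ k := Nat.div_mul_le_self _ _
        have h2 : k % (H + 1) < H + 1 := Nat.mod_lt _ ((by omega : 0 < H + 1))
        have h3 : (H + 1) * (k / (H + 1)) + k % (H + 1) = k := Nat.div_add_mod _ _
        have h4 : k / (H + 1) * (H + 1) = (H + 1) * (k / (H + 1)) := Nat.mul_comm _ _
        omega
  calc μ (⋃ i ∈ Finset.range (H + T + 1), P i)
      ≤ μ ((⋃ j ∈ Finset.Icc T (T + H), P j) ∪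
          ⋃ i ∈ Finset.range τ, ⋃ j ∈ Finset.Icc (i * (H + 1)) (i * (H + 1) + H), P j) :=
        measure_mono hsub
    _ ≤ μ (⋃ j ∈ Finset.Icc T (T + H), P j) +
          μ (⋃ i ∈ Finset.range τ, ⋃ j ∈ Finset.Icc (i * (H + 1)) (i * (H + 1) + H), P j) :=
        measure_union_le _ _
    _ ≤ lam ^ T * M + ∑ i ∈ Finset.range τ, lam ^ (i * (H + 1)) * M := by
        gcongr
        · exact hblock T
        · refine le_trans (measure_biUnion_finset_le _ _) ?_
          exact Finset.sum_le_sum fun i _ => hblock (i * (H + 1))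
    _ = M * (lam ^ T + ∑ i ∈ Finset.range τ, lam ^ (i * (H + 1))) := by
        rw [mul_add, mul_comm (lam ^ T), Finset.mul_sum]
        congr 1
        exact Finset.sum_congr rfl fun i _ => mul_comm _ _
end

section
/- Let S be a transition system with free input (U_δ(x) = U for all x), and let S_ℓ be its SAℓCA with the simulation relation R = {(x, ζ) : ζ ∈ E_ℓ(x)} from S to S_ℓ. Then the inverse relation R⁻¹ ⊆ X_ℓ × X is an alternating simulation relation from S_ℓ to S with respect to U × Y: every initial abstract state relates to an initial concrete state, related states have equal outputs, and for every (ζ, x) ∈ R⁻¹ and every input u admissible at ζ in S_ℓ, if (x, u, x') ∈ δ then there exists (ζ, u, ζ') ∈ δ_ℓ with (ζ', x') ∈ R⁻¹. -/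
/-- A transition system `S = (X, X₀, U, δ, Y, H)`. -/
structure TS (X U Y : Type*) where
  init : Set X
  delta : Set (X × U × X)
  out : X → Y

/-- An `H`-long internal behavior. -/
def TS.IsTraj {X U Y : Type*} (S : TS X U Y) (H : ℕ) (xs : ℕ → X) (us : ℕ → U) : Prop :=
  xs 0 ∈ S.init ∧ ∀ i < H, (xs i, us i, xs (i + 1)) ∈ S.delta

/-- An infinite internal behavior (used since every state is initial / free input:
`ℓ`-sequences realizable at any time are exactly those realizable along such runs). -/
def TS.IsTrajInf {X U Y : Type*} (S : TS X U Y) (xs : ℕ → X) (us : ℕ → U) : Prop :=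
  xs 0 ∈ S.init ∧ ∀ i, (xs i, us i, xs (i + 1)) ∈ S.delta

/-- An `ℓ`-sequence `y₀u₀…u_{ℓ−1}y_ℓ`, where the padding symbol `⋄` is `none`. -/
abbrev LSeq (U Y : Type*) (ℓ : ℕ) := (Fin (ℓ + 1) → Option Y) × (Fin ℓ → Option U)

/-- The `ℓ`-long (padded) external history `H(ξ[j−ℓ, j])` of a run at time `j`. -/
def histLS {X U Y : Type*} (S : TS X U Y) (xs : ℕ → X) (us : ℕ → U) (ℓ j : ℕ) :
    LSeq U Y ℓ :=
  (fun t => if ℓ ≤ j + (t : ℕ) then some (S.out (xs (j + (t : ℕ) - ℓ))) else none,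
   fun t => if ℓ ≤ j + (t : ℕ) then some (us (j + (t : ℕ) - ℓ)) else none)

/-- `Π_ℓ`: the set of all `ℓ`-sequences of external behaviors of `S`. -/
def PiInf {X U Y : Type*} (S : TS X U Y) (ℓ : ℕ) : Set (LSeq U Y ℓ) :=
  {ζ | ∃ xs us j, S.IsTrajInf xs us ∧ ζ = histLS S xs us ℓ j}

/-- `E_ℓ(x)`: the corresponding external strings of length `ℓ` of a state `x`. -/
def CESInf {X U Y : Type*} (S : TS X U Y) (ℓ : ℕ) (x : X) : Set (LSeq U Y ℓ) :=
  {ζ | ∃ xs us j, S.IsTrajInf xs us ∧ xs j = x ∧ ζ = histLS S xs us ℓ j}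

/-- `w[0, ℓ]`: the `ℓ`-prefix of an `(ℓ+1)`-sequence. -/
def prefixLS {U Y : Type*} {ℓ : ℕ} (w : LSeq U Y (ℓ + 1)) : LSeq U Y ℓ :=
  (fun t => w.1 t.castSucc, fun t => w.2 t.castSucc)

/-- `w[1, ℓ+1]`: the `ℓ`-suffix of an `(ℓ+1)`-sequence. -/
def suffixLS {U Y : Type*} {ℓ : ℕ} (w : LSeq U Y (ℓ + 1)) : LSeq U Y ℓ :=
  (fun t => w.1 t.succ, fun t => w.2 t.succ)

/-- `ζ · (u, y)`: append input `u` and output `y` to an `ℓ`-sequence. -/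
def concatLS {U Y : Type*} {ℓ : ℕ} (ζ : LSeq U Y ℓ) (u : U) (y : Y) :
    LSeq U Y (ℓ + 1) :=
  (fun t => if h : (t : ℕ) < ℓ + 1 then ζ.1 ⟨t, h⟩ else some y,
   fun t => if h : (t : ℕ) < ℓ then ζ.2 ⟨t, h⟩ else some u)

/-- The (data-driven) SAℓCA of `S` built from a set `Π'` of `(ℓ+1)`-sequences:
states are `ℓ`-sequences, initial states the initial padded histories, transitions
follow the domino rule over `Π'`, and the output is the last output symbol. -/
def SALCA {X U Y : Type*} (S : TS X U Y) (ℓ : ℕ)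
    (Pi' : Set (LSeq U Y (ℓ + 1))) : TS (LSeq U Y ℓ) U (Option Y) where
  init := {ζ | ∃ xs us, S.IsTrajInf xs us ∧ ζ = histLS S xs us ℓ 0}
  delta := {t | ∃ w ∈ Pi',
    prefixLS w = t.1 ∧ suffixLS w = t.2.2 ∧ w.2 (Fin.last ℓ) = some t.2.1}
  out := fun ζ => ζ.1 (Fin.last ℓ)

/-- The concrete system with outputs lifted to `Option Y` (no padding ever occurs). -/
def liftOut {X U Y : Type*} (S : TS X U Y) : TS X U (Option Y) :=
  { init := S.init, delta := S.delta, out := fun x => some (S.out x) }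

/-- Simulation relation from `S_a` to `S_b` w.r.t. `U × Y`. -/
def IsSim {Xa Xb U Y : Type*} (Sa : TS Xa U Y) (Sb : TS Xb U Y)
    (R : Set (Xa × Xb)) : Prop :=
  (∀ xa ∈ Sa.init, ∃ xb ∈ Sb.init, (xa, xb) ∈ R) ∧
  (∀ p ∈ R, Sa.out p.1 = Sb.out p.2) ∧
  (∀ p ∈ R,
    (∀ u : U, (∃ x', (p.1, u, x') ∈ Sa.delta) → ∃ x', (p.2, u, x') ∈ Sb.delta) ∧
    ∀ (u : U) (xa' : Xa), (p.1, u, xa') ∈ Sa.delta →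
      ∃ xb', (p.2, u, xb') ∈ Sb.delta ∧ (xa', xb') ∈ R)

/-- Alternating simulation relation from `S_b` to `S_a` w.r.t. `U × Y`. -/
def IsAltSim {Xb Xa U Y : Type*} (Sb : TS Xb U Y) (Sa : TS Xa U Y)
    (Z : Set (Xb × Xa)) : Prop :=
  (∀ xb ∈ Sb.init, ∃ xa ∈ Sa.init, (xb, xa) ∈ Z) ∧
  (∀ p ∈ Z, Sb.out p.1 = Sa.out p.2) ∧
  (∀ p ∈ Z,
    (∀ u : U, (∃ x', (p.1, u, x') ∈ Sb.delta) → ∃ x', (p.2, u, x') ∈ Sa.delta) ∧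
    ∀ u : U, (∃ x', (p.1, u, x') ∈ Sb.delta) →
      ∀ xa' : Xa, (p.2, u, xa') ∈ Sa.delta →
        ∃ xb', (p.1, u, xb') ∈ Sb.delta ∧ (xb', xa') ∈ Z)

/-- Proposition 1, second part: if `S` has free input, the inverse
`R⁻¹ = {(ζ, x) : ζ ∈ E_ℓ(x)}` of the relation of Statement 11 is an alternating
simulation relation from the SAℓCA `S_ℓ` to `S` w.r.t. `U × Y`. -/
theorem stmt12 {X U Y : Type*} (S : TS X U Y) (ℓ : ℕ)
    (hfree : ∀ (x : X) (u : U), ∃ x', (x, u, x') ∈ S.delta) :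
    IsAltSim (SALCA S ℓ (PiInf S (ℓ + 1))) (liftOut S)
      {p : LSeq U Y ℓ × X | p.1 ∈ CESInf S ℓ p.2} := by
  refine ⟨?_, ?_, ?_⟩
  · rintro ζ ⟨xs, us, htraj, rfl⟩
    exact ⟨xs 0, htraj.1, xs, us, 0, htraj, rfl, rfl⟩
  · rintro ⟨ζ, x⟩ ⟨xs, us, j, htraj, rfl, rfl⟩
    simp [SALCA, liftOut, histLS]
  · rintro ⟨ζ, x⟩ ⟨xs, us, j, htraj, rfl, rfl⟩
    refine ⟨fun u _ => hfree (xs j) u, ?_⟩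
    rintro u - x' hx'
    choose f hf using hfree
    set g : ℕ → X := fun k => Nat.rec x' (fun _ xk => f xk u) k with hg
    set xs' : ℕ → X := fun i => if i ≤ j then xs i else g (i - j - 1) with hxs'
    set us' : ℕ → U := fun i => if i < j then us i else u with hus'
    have hxsle : ∀ i, i ≤ j → xs' i = xs i := by intro i hi; simp [hxs', hi]
    have husle : ∀ i, i < j → us' i = us i := by intro i hi; simp [hus', hi]
    have hxs'j1 : xs' (j + 1) = x' := by simp [hxs', hg]
    have htraj' : S.IsTrajInf xs' us' := by
      constructor
      · rw [hxsle 0 (Nat.zero_le j)]; exact htraj.1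
      · intro i
        rcases lt_trichotomy i j with h | rfl | h
        · rw [hxsle i h.le, hxsle (i+1) h, husle i h]
          exact htraj.2 i
        · rw [hxsle i le_rfl, hxs'j1]
          have : us' i = u := by simp [hus']
          rw [this]; exact hx'
        · have h1 : ¬ i ≤ j := by omega
          have h2 : ¬ i + 1 ≤ j := by omega
          have h3 : ¬ i < j := by omega
          have h4 : i + 1 - j - 1 = (i - j - 1) + 1 := by omega
          simp only [hxs', hus', h1, h2, h3, if_neg, if_false, h4]
          exact hf (g (i - j - 1)) u
    refine ⟨histLS S xs' us' ℓ (j+1),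
      ⟨histLS S xs' us' (ℓ+1) (j+1), ⟨xs', us', j+1, htraj', rfl⟩, ?_, ?_, ?_⟩,
      xs', us', j+1, htraj', hxs'j1, rfl⟩
    · refine Prod.ext (funext fun t => ?_) (funext fun t => ?_)
      · have ht : (t : ℕ) ≤ ℓ := Nat.lt_succ_iff.mp t.isLt
        simp only [prefixLS, histLS, Fin.coe_castSucc]
        by_cases h : ℓ ≤ j + (t : ℕ)
        · have h' : ℓ + 1 ≤ j + 1 + (t : ℕ) := by omega
          have he : j + 1 + (t : ℕ) - (ℓ + 1) = j + (t : ℕ) - ℓ := by omega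
          have hle : j + (t : ℕ) - ℓ ≤ j := by omega
          rw [if_pos h', if_pos h, he, hxsle _ hle]
        · have h' : ¬ (ℓ + 1 ≤ j + 1 + (t : ℕ)) := by omega
          rw [if_neg h', if_neg h]
      · have ht : (t : ℕ) < ℓ := t.isLt
        simp only [prefixLS, histLS, Fin.coe_castSucc]
        by_cases h : ℓ ≤ j + (t : ℕ)
        · have h' : ℓ + 1 ≤ j + 1 + (t : ℕ) := by omega
          have he : j + 1 + (t : ℕ) - (ℓ + 1) = j + (t : ℕ) - ℓ := by omega
          have hle : j + (t : ℕ) - ℓ < j := by omega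
          rw [if_pos h', if_pos h, he, husle _ hle]
        · have h' : ¬ (ℓ + 1 ≤ j + 1 + (t : ℕ)) := by omega
          rw [if_neg h', if_neg h]
    · refine Prod.ext (funext fun t => ?_) (funext fun t => ?_)
      · simp only [suffixLS, histLS, Fin.val_succ]
        by_cases h : ℓ ≤ j + 1 + (t : ℕ)
        · have h' : ℓ + 1 ≤ j + 1 + ((t : ℕ) + 1) := by omega
          have he : j + 1 + ((t : ℕ) + 1) - (ℓ + 1) = j + 1 + (t : ℕ) - ℓ := by omega
          rw [if_pos h', if_pos h, he]
        · have h' : ¬ (ℓ + 1 ≤ j + 1 + ((t : ℕ) + 1)) := by omega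
          rw [if_neg h', if_neg h]
      · simp only [suffixLS, histLS, Fin.val_succ]
        by_cases h : ℓ ≤ j + 1 + (t : ℕ)
        · have h' : ℓ + 1 ≤ j + 1 + ((t : ℕ) + 1) := by omega
          have he : j + 1 + ((t : ℕ) + 1) - (ℓ + 1) = j + 1 + (t : ℕ) - ℓ := by omega
          rw [if_pos h', if_pos h, he]
        · have h' : ¬ (ℓ + 1 ≤ j + 1 + ((t : ℕ) + 1)) := by omega
          rw [if_neg h', if_neg h]
    · have h' : ℓ + 1 ≤ j + 1 + ℓ := by omega
      have he : j + 1 + ℓ - (ℓ + 1) = j := by omega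
      simp only [histLS, Fin.val_last, if_pos h', he]
      have : us' j = u := by simp [hus']
      rw [this]
end

section
/- Let S be a transition system with X₀ = X (every state is initial) and free input. Then for every state x, every horizon H > ℓ, and every ℓ < H, the set of corresponding external strings satisfies E_{ℓ, ℓ+1}(x) = E_{ℓ, H}(x); i.e., the set of ℓ-long output-input histories leading to x within horizon H does not depend on H as long as H > ℓ. -/
/-- `E_{ℓ,H}(x)`: the `ℓ`-long corresponding external strings of `x` within horizon `H`. -/
def CESH {X U Y : Type*} (S : TS X U Y) (ℓ H : ℕ) (x : X) : Set (LSeq U Y ℓ) :=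
  {ζ | ∃ xs us j, S.IsTraj H xs us ∧ j ≤ H ∧ xs j = x ∧ ζ = histLS S xs us ℓ j}


/-- Any finite transition chain extends to an infinite run, agreeing on the prefix. -/
lemma extendTraj {X U Y : Type*} (S : TS X U Y)
    (hinit : S.init = Set.univ)
    (hfree : ∀ (x : X) (u : U), ∃ x', (x, u, x') ∈ S.delta)
    (N : ℕ) (xs : ℕ → X) (us : ℕ → U)
    (htr : ∀ i < N, (xs i, us i, xs (i + 1)) ∈ S.delta) :
    ∃ xs' us', S.IsTrajInf xs' us' ∧ (∀ i ≤ N, xs' i = xs i) ∧ ∀ i < N, us' i = us i := by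
  classical
  set u0 := us 0 with hu0
  let step : X → X := fun x => Classical.choose (hfree x u0)
  have hstep : ∀ x, (x, u0, step x) ∈ S.delta := fun x => Classical.choose_spec (hfree x u0)
  let xs' : ℕ → X := fun i =>
    Nat.rec (xs 0) (fun k ih => if k + 1 ≤ N then xs (k + 1) else step ih) i
  let us' : ℕ → U := fun i => if i < N then us i else u0
  have hsucc : ∀ k, xs' (k + 1) = if k + 1 ≤ N then xs (k + 1) else step (xs' k) :=
    fun k => rfl
  have hagree : ∀ i ≤ N, xs' i = xs i := by
    intro i hi
    cases i with
    | zero => rfl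
    | succ k => rw [hsucc, if_pos hi]
  refine ⟨xs', us', ⟨by rw [hinit]; trivial, ?_⟩, hagree, fun i hi => if_pos hi⟩
  intro i
  by_cases hi : i < N
  · have h1 : xs' i = xs i := hagree i hi.le
    have h2 : xs' (i + 1) = xs (i + 1) := hagree (i + 1) hi
    have h3 : us' i = us i := if_pos hi
    rw [h1, h2, h3]
    exact htr i hi
  · have h3 : us' i = u0 := if_neg hi
    have h2 : xs' (i + 1) = step (xs' i) := by
      rw [hsucc, if_neg (by omega)]
    rw [h2, h3]
    exact hstep _

lemma trajInf_traj {X U Y : Type*} {S : TS X U Y} {xs us} (h : S.IsTrajInf xs us) (H : ℕ) :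
    S.IsTraj H xs us := ⟨h.1, fun i _ => h.2 i⟩

/-- histLS only depends on the run up to time `j`. -/
lemma histLS_congr {X U Y : Type*} (S : TS X U Y) {xs xs' : ℕ → X} {us us' : ℕ → U}
    (ℓ j : ℕ) (hx : ∀ i ≤ j, xs i = xs' i) (hu : ∀ i < j, us i = us' i) :
    histLS S xs us ℓ j = histLS S xs' us' ℓ j := by
  unfold histLS
  refine Prod.ext ?_ ?_ <;> funext t <;> simp only
  · by_cases h : ℓ ≤ j + (t : ℕ)
    · rw [if_pos h, if_pos h, hx _ (by omega)]
    · rw [if_neg h, if_neg h]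
  · by_cases h : ℓ ≤ j + (t : ℕ)
    · have ht : (t : ℕ) < ℓ := t.isLt
      rw [if_pos h, if_pos h, hu _ (by omega)]
    · rw [if_neg h, if_neg h]

/-- if every state is initial (`X₀ = X`) and the input is free, then
`E_{ℓ,ℓ+1}(x) = E_{ℓ,H}(x)` for every state `x` and every horizon `H > ℓ`. -/
theorem stmt13 {X U Y : Type*} (S : TS X U Y)
    (hinit : S.init = Set.univ)
    (hfree : ∀ (x : X) (u : U), ∃ x', (x, u, x') ∈ S.delta) :
    ∀ (ℓ H : ℕ) (x : X), ℓ < H → CESH S ℓ (ℓ + 1) x = CESH S ℓ H x := by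
  intro ℓ H x hH
  ext ζ
  simp only [CESH, Set.mem_setOf_eq]
  constructor
  · rintro ⟨xs, us, j, ⟨_, htr⟩, hj, hx, hζ⟩
    obtain ⟨xs', us', hinf, hax, hau⟩ :=
      extendTraj S hinit hfree (ℓ + 1) xs us (fun i hi => htr i hi)
    refine ⟨xs', us', j, trajInf_traj hinf H, by omega, by rw [hax j hj]; exact hx, ?_⟩
    rw [hζ]
    exact histLS_congr S ℓ j (fun i hi => (hax i (by omega)).symm)
      (fun i hi => (hau i (by omega)).symm)
  · rintro ⟨xs, us, j, ⟨_, htr⟩, hj, hx, hζ⟩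
    by_cases hjl : j ≤ ℓ + 1
    · exact ⟨xs, us, j, ⟨by rw [hinit]; trivial, fun i hi => htr i (by omega)⟩, hjl, hx, hζ⟩
    · -- shift by d = j - ℓ
      have hlj : ℓ ≤ j := by omega
      set d := j - ℓ with hd
      obtain ⟨xs', us', hinf, hax, hau⟩ :=
        extendTraj S hinit hfree ℓ (fun i => xs (i + d)) (fun i => us (i + d))
          (fun i hi => by
            show (xs (i + d), us (i + d), xs (i + 1 + d)) ∈ S.delta
            rw [show i + 1 + d = i + d + 1 by omega]
            exact htr (i + d) (by omega))
      refine ⟨xs', us', ℓ, trajInf_traj hinf (ℓ + 1), by omega,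
        by rw [hax ℓ le_rfl]; show xs (ℓ + d) = x; rw [show ℓ + d = j by omega]; exact hx, ?_⟩
    -- histLS equality
      have h1 : histLS S xs' us' ℓ ℓ
          = histLS S (fun i => xs (i + d)) (fun i => us (i + d)) ℓ ℓ :=
        histLS_congr S ℓ ℓ (fun i hi => hax i hi) (fun i hi => hau i hi)
      rw [hζ, h1]
      unfold histLS
      refine Prod.ext ?_ ?_ <;> funext t <;> simp only
      · rw [if_pos (by omega), if_pos (by omega),
          show j + (t : ℕ) - ℓ = ℓ + (t : ℕ) - ℓ + d by omega]
      · have ht : (t : ℕ) < ℓ := t.isLt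
        rw [if_pos (by omega), if_pos (by omega),
          show j + (t : ℕ) - ℓ = ℓ + (t : ℕ) - ℓ + d by omega]
end

section
/- Let S be a transition system with free input and let S_ℓ and S_{ℓ+1} be its SAℓCAs of memory ℓ and ℓ+1 respectively. Then the sets of external behaviors are nested: B(S) ⊆ B(S_{ℓ+1}) ⊆ B(S_ℓ), i.e., every external behavior of the concrete system is an external behavior of S_{ℓ+1}, and every external behavior of S_{ℓ+1} is an external behavior of S_ℓ. -/
/-- The set of `H`-long external behaviors of a transition system: pairs of an output
sequence and an input sequence realized by some internal behavior up to time `H`. -/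
def ExtBeh {X U Y : Type*} (S : TS X U Y) (H : ℕ) : Set ((ℕ → Y) × (ℕ → U)) :=
  {γ | ∃ xs : ℕ → X, S.IsTraj H xs γ.2 ∧ ∀ i ≤ H, γ.1 i = S.out (xs i)}

/-- Taking the `ℓ`-suffix of the `(ℓ+1)`-history gives the `ℓ`-history. -/
lemma hist_suffix {X U Y : Type*} (S : TS X U Y) (xs : ℕ → X) (us : ℕ → U) (m j : ℕ) :
    suffixLS (histLS S xs us (m + 1) j) = histLS S xs us m j := by
  unfold suffixLS histLS
  simp only [Prod.mk.injEq]
  constructor <;> funext t <;> simp only [Fin.val_succ]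
  · rcases le_or_gt m (j + (t : ℕ)) with h | h
    · rw [if_pos (by omega), if_pos h]
      have : j + ((t : ℕ) + 1) - (m + 1) = j + (t : ℕ) - m := by omega
      rw [this]
    · rw [if_neg (by omega), if_neg (by omega)]
  · rcases le_or_gt m (j + (t : ℕ)) with h | h
    · rw [if_pos (by omega), if_pos h]
      have : j + ((t : ℕ) + 1) - (m + 1) = j + (t : ℕ) - m := by omega
      rw [this]
    · rw [if_neg (by omega), if_neg (by omega)]

/-- Taking the `ℓ`-prefix of the `(ℓ+1)`-history at time `j+1` gives the
`ℓ`-history at time `j`. -/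
lemma hist_prefix {X U Y : Type*} (S : TS X U Y) (xs : ℕ → X) (us : ℕ → U) (m j : ℕ) :
    prefixLS (histLS S xs us (m + 1) (j + 1)) = histLS S xs us m j := by
  unfold prefixLS histLS
  simp only [Prod.mk.injEq]
  constructor <;> funext t <;> simp only [Fin.coe_castSucc]
  · rcases le_or_gt m (j + (t : ℕ)) with h | h
    · rw [if_pos (by omega), if_pos h]
      have : j + 1 + (t : ℕ) - (m + 1) = j + (t : ℕ) - m := by omega
      rw [this]
    · rw [if_neg (by omega), if_neg (by omega)]
  · rcases le_or_gt m (j + (t : ℕ)) with h | h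
    · rw [if_pos (by omega), if_pos h]
      have : j + 1 + (t : ℕ) - (m + 1) = j + (t : ℕ) - m := by omega
      rw [this]
    · rw [if_neg (by omega), if_neg (by omega)]

/-- The last output symbol of the `m`-history at time `j`. -/
lemma hist_last_out {X U Y : Type*} (S : TS X U Y) (xs : ℕ → X) (us : ℕ → U) (m j : ℕ) :
    (histLS S xs us m j).1 (Fin.last m) = some (S.out (xs j)) := by
  unfold histLS
  simp only [Fin.val_last]
  rw [if_pos (by omega)]
  have : j + m - m = j := by omega
  rw [this]

/-- The last input symbol of the `(m+1)`-history at time `j+1`. -/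
lemma hist_last_in {X U Y : Type*} (S : TS X U Y) (xs : ℕ → X) (us : ℕ → U) (m j : ℕ) :
    (histLS S xs us (m + 1) (j + 1)).2 (Fin.last m) = some (us j) := by
  unfold histLS
  simp only [Fin.val_last]
  rw [if_pos (by omega)]
  have : j + 1 + m - (m + 1) = j := by omega
  rw [this]

/-- Extend a finite trajectory of a free-input system to an infinite one. -/
lemma extend_traj {X U Y : Type*} (S : TS X U Y)
    (hfree : ∀ (x : X) (u : U), ∃ x', (x, u, x') ∈ S.delta)
    (H : ℕ) (xs : ℕ → X) (us : ℕ → U) (h : S.IsTraj H xs us) :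
    ∃ xs' : ℕ → X, S.IsTrajInf xs' us ∧ ∀ i ≤ H, xs' i = xs i := by
  classical
  let f : ℕ → X := fun n => Nat.rec (xs 0)
    (fun n xn => if n + 1 ≤ H then xs (n + 1) else (hfree xn (us n)).choose) n
  have hf0 : f 0 = xs 0 := rfl
  have hfsucc : ∀ n, f (n + 1) =
      if n + 1 ≤ H then xs (n + 1) else (hfree (f n) (us n)).choose := fun n => rfl
  have hagree : ∀ i ≤ H, f i = xs i := by
    intro i hi
    cases i with
    | zero => exact hf0
    | succ n => rw [hfsucc, if_pos hi]
  refine ⟨f, ⟨hf0 ▸ h.1, ?_⟩, hagree⟩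
  intro i
  rcases le_or_gt (i + 1) H with hi | hi
  · rw [hfsucc, if_pos hi, hagree i (by omega)]
    exact h.2 i (by omega)
  · rw [hfsucc, if_neg (by omega)]
    exact (hfree (f i) (us i)).choose_spec

/-- The histories along an infinite trajectory form a trajectory of the SAℓCA. -/
lemma hist_traj_salca {X U Y : Type*} (S : TS X U Y) (m : ℕ) (xs : ℕ → X) (us : ℕ → U)
    (h : S.IsTrajInf xs us) (H : ℕ) :
    (SALCA S m (PiInf S (m + 1))).IsTraj H (fun j => histLS S xs us m j) us := by
  constructor
  · exact ⟨xs, us, h, rfl⟩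
  · intro i _
    exact ⟨histLS S xs us (m + 1) (i + 1), ⟨xs, us, i + 1, h, rfl⟩,
      hist_prefix S xs us m i, hist_suffix S xs us m (i + 1), hist_last_in S xs us m i⟩

/-- nesting of behaviors: `B(S) ⊆ B(S_{ℓ+1}) ⊆ B(S_ℓ)` for the SAℓCAs of
memory `ℓ+1` and `ℓ` built from `Π_{ℓ+2}` and `Π_{ℓ+1}` respectively. -/
theorem stmt14 {X U Y : Type*} (S : TS X U Y) (ℓ : ℕ)
    (hfree : ∀ (x : X) (u : U), ∃ x', (x, u, x') ∈ S.delta) :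
    ∀ H : ℕ,
      ExtBeh (liftOut S) H ⊆ ExtBeh (SALCA S (ℓ + 1) (PiInf S (ℓ + 2))) H ∧
      ExtBeh (SALCA S (ℓ + 1) (PiInf S (ℓ + 2))) H ⊆
        ExtBeh (SALCA S ℓ (PiInf S (ℓ + 1))) H := by
  intro H
  constructor
  · -- B(S) ⊆ B(S_{ℓ+1})
    rintro γ ⟨xs, htraj, hout⟩
    obtain ⟨xs', hinf, hagree⟩ := extend_traj S hfree H xs γ.2 htraj
    refine ⟨fun j => histLS S xs' γ.2 (ℓ + 1) j, hist_traj_salca S (ℓ + 1) xs' γ.2 hinf H, ?_⟩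
    intro i hi
    show γ.1 i = (histLS S xs' γ.2 (ℓ + 1) i).1 (Fin.last (ℓ + 1))
    rw [hist_last_out, hagree i hi]
    exact hout i hi
  · -- B(S_{ℓ+1}) ⊆ B(S_ℓ)
    rintro γ ⟨ζs, ⟨hinit, hstep⟩, hout⟩
    refine ⟨fun j => suffixLS (ζs j), ⟨?_, ?_⟩, ?_⟩
    · obtain ⟨xs, us, hinf, hζ⟩ := hinit
      refine ⟨xs, us, hinf, ?_⟩
      show suffixLS (ζs 0) = histLS S xs us ℓ 0
      rw [hζ, hist_suffix]
    · intro i hi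
      obtain ⟨w, ⟨xs, us, j, hinf, hw⟩, hpre, hsuf, hlast⟩ := hstep i hi
      simp only at hpre hsuf hlast
      refine ⟨suffixLS w, ⟨xs, us, j, hinf, by rw [hw, hist_suffix]⟩, ?_, ?_, ?_⟩
      · show prefixLS (suffixLS w) = suffixLS (ζs i)
        rw [← hpre]
        unfold prefixLS suffixLS
        simp only [Prod.mk.injEq]
        exact ⟨funext fun t => by rw [Fin.succ_castSucc],
          funext fun t => by rw [Fin.succ_castSucc]⟩
      · show suffixLS (suffixLS w) = suffixLS (ζs (i + 1))
        rw [← hsuf]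
      · show w.2 (Fin.last ℓ).succ = some (γ.2 i)
        rw [Fin.succ_last]
        exact hlast
    · intro i hi
      show γ.1 i = (suffixLS (ζs i)).1 (Fin.last ℓ)
      have : (suffixLS (ζs i)).1 (Fin.last ℓ) = (ζs i).1 (Fin.last (ℓ + 1)) := by
        show (ζs i).1 (Fin.last ℓ).succ = _
        rw [Fin.succ_last]
      rw [this]
      exact hout i hi
end

section
/- Let S_Σ be the deterministic transition system of a control system with free input, and let Ŝ_ℓ be a data-driven SAℓCA constructed from a subset Π̂_{ℓ+1} ⊆ Π_{ℓ+1} of witnessed (ℓ+1)-sequences, with relation R̂ = {(x, ζ) ∈ X × X̂_ℓ : ζ ∈ E_ℓ(x)}. Suppose (x, ζ) ∈ R̂ and (x, u, x') ∈ δ with H(x') = y. Then there exists a transition (ζ, u, ζ') ∈ δ̂_ℓ with H_ℓ(ζ') = y and (x', ζ') ∈ R̂ if and only if the concatenation ζ · ζ'[ℓ−1, ℓ] (i.e., ζ extended by the pair (u, y)) belongs to Π̂_{ℓ+1}. -/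
/-- Lemma 1: for a deterministic free-input system `S_Σ` and the
data-driven SAℓCA `Ŝ_ℓ` built from witnessed sequences `Π̂_{ℓ+1} ⊆ Π_{ℓ+1}`, with
`R̂ = {(x, ζ) : ζ ∈ E_ℓ(x)}`: if `(x, ζ) ∈ R̂`, `(x, u, x') ∈ δ` and `H(x') = y`, then
there is a transition `(ζ, u, ζ') ∈ δ̂_ℓ` with output `y` and `(x', ζ') ∈ R̂` iff
the concatenation `ζ · (u, y)` belongs to `Π̂_{ℓ+1}`. -/
theorem stmt15 {X U Y : Type*} (S : TS X U Y) (ℓ : ℕ)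
    (hfree : ∀ (x : X) (u : U), ∃ x', (x, u, x') ∈ S.delta)
    (hdet : ∀ (x : X) (u : U) (x' x'' : X),
      (x, u, x') ∈ S.delta → (x, u, x'') ∈ S.delta → x' = x'')
    (Pih : Set (LSeq U Y (ℓ + 1))) (hsub : Pih ⊆ PiInf S (ℓ + 1))
    (x : X) (ζ : LSeq U Y ℓ) (hR : ζ ∈ CESInf S ℓ x)
    (u : U) (x' : X) (hδ : (x, u, x') ∈ S.delta) (y : Y) (hy : S.out x' = y) :
    (∃ ζ' : LSeq U Y ℓ, (ζ, u, ζ') ∈ (SALCA S ℓ Pih).delta ∧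
        (SALCA S ℓ Pih).out ζ' = some y ∧ ζ' ∈ CESInf S ℓ x') ↔
      concatLS ζ u y ∈ Pih := by
  constructor
  · rintro ⟨ζ', ⟨w, hw, hpre, hsuf, hlast⟩, hout, -⟩
    have h1 : w.1 = (concatLS ζ u y).1 := by
      funext t
      by_cases ht : (t : ℕ) < ℓ + 1
      · have he : t = (⟨t, ht⟩ : Fin (ℓ + 1)).castSucc := by
          ext; simp
        have := congrFun (congrArg Prod.fst hpre) ⟨t, ht⟩
        simp only [prefixLS] at this
        rw [concatLS]
        simp only [dif_pos ht]
        rw [← he] at this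
        exact this
      · have he : t = (Fin.last ℓ).succ := by
          ext
          simp only [Fin.val_succ, Fin.val_last]
          omega
        have := congrFun (congrArg Prod.fst hsuf) (Fin.last ℓ)
        simp only [suffixLS] at this
        rw [concatLS]
        simp only [dif_neg ht]
        rw [← he] at this
        rw [this]
        simpa [SALCA] using hout
    have h2 : w.2 = (concatLS ζ u y).2 := by
      funext t
      by_cases ht : (t : ℕ) < ℓ
      · have he : t = (⟨t, ht⟩ : Fin ℓ).castSucc := by
          ext; simp
        have := congrFun (congrArg Prod.snd hpre) ⟨t, ht⟩
        simp only [prefixLS] at this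
        rw [concatLS]
        simp only [dif_pos ht]
        rw [← he] at this
        exact this
      · have he : t = Fin.last ℓ := by
          ext
          simp only [Fin.val_last]
          omega
        rw [concatLS]
        simp only [dif_neg ht]
        rw [he, hlast]
    have : w = concatLS ζ u y := Prod.ext h1 h2
    rwa [this] at hw
  · intro hc
    obtain ⟨xs, us, j, htraj, hxj, hζ⟩ := hR
    -- build the extended run
    classical
    let f : ℕ → X := fun n => Nat.rec x' (fun _ z => Classical.choose (hfree z u)) n
    have hf0 : f 0 = x' := rfl
    have hfs : ∀ n, (f n, u, f (n + 1)) ∈ S.delta := fun n =>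
      Classical.choose_spec (hfree (f n) u)
    let xs' : ℕ → X := fun i => if i ≤ j then xs i else f (i - (j + 1))
    let us' : ℕ → U := fun i => if i < j then us i else u
    have hxs'le : ∀ i, i ≤ j → xs' i = xs i := fun i hi => if_pos hi
    have hxs'j1 : xs' (j + 1) = x' := by
      simp only [xs']
      have hn : ¬ j + 1 ≤ j := by omega
      rw [if_neg hn]
      norm_num
      exact hf0
    have htraj' : S.IsTrajInf xs' us' := by
      constructor
      · rw [hxs'le 0 (Nat.zero_le j)]
        exact htraj.1
      · intro i
        rcases lt_trichotomy i j with hij | hij | hij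
        · rw [hxs'le i (le_of_lt hij), hxs'le (i + 1) hij]
          simp only [us', if_pos hij]
          exact htraj.2 i
        · subst hij
          rw [hxs'le i le_rfl, hxj, hxs'j1]
          have h3 : us' i = u := by
            simp only [us']
            rw [if_neg (lt_irrefl i)]
          rw [h3]
          exact hδ
        · have hn1 : ¬ i ≤ j := by omega
          have hn2 : ¬ i + 1 ≤ j := by omega
          have hn3 : ¬ i < j := by omega
          have h1 : xs' i = f (i - (j + 1)) := by
            simp only [xs']
            rw [if_neg hn1]
          have h2 : xs' (i + 1) = f (i - (j + 1) + 1) := by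
            simp only [xs']
            have hidx : i + 1 - (j + 1) = i - (j + 1) + 1 := by omega
            rw [if_neg hn2, hidx]
          have h3 : us' i = u := by
            simp only [us']
            rw [if_neg hn3]
          rw [h1, h2, h3]
          exact hfs _
    refine ⟨suffixLS (concatLS ζ u y), ⟨concatLS ζ u y, hc, ?_, rfl, ?_⟩, ?_, ?_⟩
    · -- prefixLS (concatLS ζ u y) = ζ
      apply Prod.ext
      · funext t
        simp only [prefixLS, concatLS]
        rw [dif_pos (by simpa using t.isLt)]
        exact congrArg ζ.1 (Fin.ext (by simp))
      · funext t
        simp only [prefixLS, concatLS]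
        rw [dif_pos (by simpa using t.isLt)]
        exact congrArg ζ.2 (Fin.ext (by simp))
    · -- last input
      simp only [concatLS]
      rw [dif_neg (by simp)]
    · -- output
      simp only [SALCA, suffixLS, concatLS]
      rw [dif_neg (by simp)]
    · -- ζ' ∈ E_ℓ(x')
      refine ⟨xs', us', j + 1, htraj', hxs'j1, ?_⟩
      apply Prod.ext
      · funext t
        simp only [suffixLS, concatLS, histLS]
        simp only [Fin.val_succ]
        by_cases ht : (t : ℕ) + 1 < ℓ + 1
        · rw [dif_pos ht]
          have hζ1 := congrFun (congrArg Prod.fst hζ) ⟨(t : ℕ) + 1, by omega⟩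
          simp only [histLS] at hζ1
          rw [hζ1]
          by_cases hc2 : ℓ ≤ j + ((t : ℕ) + 1)
          · have hc3 : ℓ ≤ j + 1 + (t : ℕ) := by omega
            rw [if_pos hc2, if_pos hc3]
            have hidx : j + 1 + (t : ℕ) - ℓ = j + ((t : ℕ) + 1) - ℓ := by omega
            have hle : j + ((t : ℕ) + 1) - ℓ ≤ j := by omega
            rw [hidx, hxs'le _ hle]
          · have hc3 : ¬ ℓ ≤ j + 1 + (t : ℕ) := by omega
            rw [if_neg hc2, if_neg hc3]
        · have hte : (t : ℕ) = ℓ := by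
            have := t.isLt; omega
          have hc3 : ℓ ≤ j + 1 + (t : ℕ) := by omega
          rw [dif_neg ht, if_pos hc3]
          have : j + 1 + (t : ℕ) - ℓ = j + 1 := by omega
          rw [this, hxs'j1, hy]
      · funext t
        simp only [suffixLS, concatLS, histLS]
        simp only [Fin.val_succ]
        by_cases ht : (t : ℕ) + 1 < ℓ
        · rw [dif_pos ht]
          have hζ2 := congrFun (congrArg Prod.snd hζ) ⟨(t : ℕ) + 1, by omega⟩
          simp only [histLS] at hζ2
          rw [hζ2]
          by_cases hc2 : ℓ ≤ j + ((t : ℕ) + 1)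
          · have hc3 : ℓ ≤ j + 1 + (t : ℕ) := by omega
            rw [if_pos hc2, if_pos hc3]
            simp only [us']
            have hidx : j + 1 + (t : ℕ) - ℓ = j + ((t : ℕ) + 1) - ℓ := by omega
            have hlt : j + ((t : ℕ) + 1) - ℓ < j := by omega
            rw [hidx, if_pos hlt]
          · have hc3 : ¬ ℓ ≤ j + 1 + (t : ℕ) := by omega
            rw [if_neg hc2, if_neg hc3]
        · have hte : (t : ℕ) + 1 = ℓ := by
            have := t.isLt; omega
          have hc3 : ℓ ≤ j + 1 + (t : ℕ) := by omega
          rw [dif_neg ht, if_pos hc3]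
          have h3 : j + 1 + (t : ℕ) - ℓ = j := by omega
          rw [h3]
          simp only [us', if_neg (lt_irrefl j)]
end
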